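/- (Type soundness) A well-typed, closed term of λ_SHACL does not get stuck during evaluation, except possibly at the forms head nil or tail nil: if S, Γ ⊢ t : T, S' with t closed and t →* t' (the reflexive-transitive closure of the step relation), then t' is either a value, or a term containing the forms head nil or tail nil, or there exists t'' with t' → t''. -/

import Mathlib

/-! # λ_SHACL: a simply typed, call-by-value λ-calculus over an RDF/SHACL setting -/

/-- Node constants `v` (RDF nodes). -/
abbrev NodeId := String

/-- Shape-environment states `S` threaded through the typing judgment
    (a shape environment associating shape names with inferred information). -/
abbrev ShapeState := List (String × String)

/-- Types of λ_SHACL: the node (shape) type `s`, function types, list types,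
    record types and booleans. -/
inductive Ty : Type where
  | shape : Ty
  | arrow : Ty → Ty → Ty
  | list : Ty → Ty
  | record : List (String × Ty) → Ty
  | bool : Ty
deriving Repr

/-- Terms of λ_SHACL. -/
inductive Tm : Type where
  | var : String → Tm
  | node : NodeId → Tm                      -- node-value constant `v`
  | abs : String → Ty → Tm → Tm             -- λ(x:T).t
  | app : Tm → Tm → Tm
  | nil : Tm
  | cons : Tm → Tm → Tm
  | head : Tm → Tm
  | tail : Tm → Tm
  | record : List (String × Tm) → Tm        -- {lᵢ = tᵢ}
  | proj : Tm → String → Tm                 -- t.l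
  | tt : Tm                                 -- true
  | ff : Tm                                 -- false
  | ite : Tm → Tm → Tm → Tm
  | letIn : String → Tm → Tm → Tm
deriving Repr

/-- Values of λ_SHACL. -/
inductive Value : Tm → Prop where
  | node (v : NodeId) : Value (.node v)
  | abs (x : String) (T : Ty) (t : Tm) : Value (.abs x T t)
  | nil : Value .nil
  | cons {v₁ v₂ : Tm} : Value v₁ → Value v₂ → Value (.cons v₁ v₂)
  | record {fs : List (String × Tm)} : (∀ p ∈ fs, Value p.2) → Value (.record fs)
  | tt : Value .tt
  | ff : Value .ff

/-- Typing contexts `Γ`. -/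
abbrev Ctx := List (String × Ty)

/-- The typing judgment `S, Γ ⊢ t : T, S'`, threading the shape-environment
    state through the subterms, with the standard rule for each construct. -/
inductive Typing : ShapeState → Ctx → Tm → Ty → ShapeState → Prop where
  | var {S Γ x T} :
      List.lookup x Γ = some T → Typing S Γ (.var x) T S
  | node {S Γ} (v : NodeId) : Typing S Γ (.node v) .shape S
  | abs {S S' Γ x T₁ t T₂} :
      Typing S ((x, T₁) :: Γ) t T₂ S' →
      Typing S Γ (.abs x T₁ t) (.arrow T₁ T₂) S
  | app {S S₁ S₂ Γ t₁ t₂ T₁ T₂} :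
      Typing S Γ t₁ (.arrow T₁ T₂) S₁ →
      Typing S₁ Γ t₂ T₁ S₂ →
      Typing S Γ (.app t₁ t₂) T₂ S₂
  | nil {S Γ T} : Typing S Γ .nil (.list T) S
  | cons {S S₁ S₂ Γ t₁ t₂ T} :
      Typing S Γ t₁ T S₁ →
      Typing S₁ Γ t₂ (.list T) S₂ →
      Typing S Γ (.cons t₁ t₂) (.list T) S₂
  | head {S S' Γ t T} :
      Typing S Γ t (.list T) S' →
      Typing S Γ (.head t) T S'
  | tail {S S' Γ t T} :
      Typing S Γ t (.list T) S' →
      Typing S Γ (.tail t) (.list T) S'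
  | record {S Γ} {fs : List (String × Tm)} {Ts : List (String × Ty)} :
      fs.length = Ts.length →
      fs.map Prod.fst = Ts.map Prod.fst →
      (∀ i : ℕ, ∀ h₁ : i < fs.length, ∀ h₂ : i < Ts.length,
        Typing S Γ (fs.get ⟨i, h₁⟩).2 (Ts.get ⟨i, h₂⟩).2 S) →
      Typing S Γ (.record fs) (.record Ts) S
  | proj {S S' Γ t Ts l T} :
      Typing S Γ t (.record Ts) S' →
      List.lookup l Ts = some T →
      Typing S Γ (.proj t l) T S'
  | tt {S Γ} : Typing S Γ .tt .bool S
  | ff {S Γ} : Typing S Γ .ff .bool S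
  | ite {S S₁ S₂ Γ c t₁ t₂ T} :
      Typing S Γ c .bool S₁ →
      Typing S₁ Γ t₁ T S₂ →
      Typing S₁ Γ t₂ T S₂ →
      Typing S Γ (.ite c t₁ t₂) T S₂
  | letIn {S S₁ S₂ Γ x t₁ T₁ t₂ T₂} :
      Typing S Γ t₁ T₁ S₁ →
      Typing S₁ ((x, T₁) :: Γ) t₂ T₂ S₂ →
      Typing S Γ (.letIn x t₁ t₂) T₂ S₂

mutual
/-- Substitution `[x ↦ s] t` of `s` for the free variable `x` in `t`. -/
def subst (x : String) (s : Tm) : Tm → Tm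
  | .var y => if y = x then s else .var y
  | .node v => .node v
  | .abs y T t => .abs y T (if y = x then t else subst x s t)
  | .app t₁ t₂ => .app (subst x s t₁) (subst x s t₂)
  | .nil => .nil
  | .cons t₁ t₂ => .cons (subst x s t₁) (subst x s t₂)
  | .head t => .head (subst x s t)
  | .tail t => .tail (subst x s t)
  | .record fs => .record (substFields x s fs)
  | .proj t l => .proj (subst x s t) l
  | .tt => .tt
  | .ff => .ff
  | .ite c t₁ t₂ => .ite (subst x s c) (subst x s t₁) (subst x s t₂)
  | .letIn y t₁ t₂ =>
      .letIn y (subst x s t₁) (if y = x then t₂ else subst x s t₂)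

/-- Substitution on record fields. -/
def substFields (x : String) (s : Tm) : List (String × Tm) → List (String × Tm)
  | [] => []
  | (l, t) :: fs => (l, subst x s t) :: substFields x s fs
end

mutual
/-- The free variables of a term. -/
def freeVars : Tm → List String
  | .var y => [y]
  | .node _ => []
  | .abs y _ t => (freeVars t).filter (· ≠ y)
  | .app t₁ t₂ => freeVars t₁ ++ freeVars t₂
  | .nil => []
  | .cons t₁ t₂ => freeVars t₁ ++ freeVars t₂
  | .head t => freeVars t
  | .tail t => freeVars t
  | .record fs => freeVarsFields fs
  | .proj t _ => freeVars t
  | .tt => []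
  | .ff => []
  | .ite c t₁ t₂ => freeVars c ++ freeVars t₁ ++ freeVars t₂
  | .letIn y t₁ t₂ => freeVars t₁ ++ (freeVars t₂).filter (· ≠ y)

/-- The free variables of record fields. -/
def freeVarsFields : List (String × Tm) → List String
  | [] => []
  | (_, t) :: fs => freeVars t ++ freeVarsFields fs
end

/-- A term is closed if it has no free variables. -/
def Closed (t : Tm) : Prop := freeVars t = []

/-- The small-step, call-by-value evaluation relation `t → t'`. -/
inductive Step : Tm → Tm → Prop where
  | beta {x T t v} : Value v → Step (.app (.abs x T t) v) (subst x v t)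
  | app₁ {t₁ t₁' t₂} : Step t₁ t₁' → Step (.app t₁ t₂) (.app t₁' t₂)
  | app₂ {v t₂ t₂'} : Value v → Step t₂ t₂' → Step (.app v t₂) (.app v t₂')
  | cons₁ {t₁ t₁' t₂} : Step t₁ t₁' → Step (.cons t₁ t₂) (.cons t₁' t₂)
  | cons₂ {v t₂ t₂'} : Value v → Step t₂ t₂' → Step (.cons v t₂) (.cons v t₂')
  | headCons {v₁ v₂} : Value v₁ → Value v₂ → Step (.head (.cons v₁ v₂)) v₁
  | headCong {t t'} : Step t t' → Step (.head t) (.head t')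
  | tailCons {v₁ v₂} : Value v₁ → Value v₂ → Step (.tail (.cons v₁ v₂)) v₂
  | tailCong {t t'} : Step t t' → Step (.tail t) (.tail t')
  | recordCong {vs : List (String × Tm)} {l t t' ts} :
      (∀ p ∈ vs, Value p.2) → Step t t' →
      Step (.record (vs ++ (l, t) :: ts)) (.record (vs ++ (l, t') :: ts))
  | projRecord {fs : List (String × Tm)} {l v} :
      (∀ p ∈ fs, Value p.2) → List.lookup l fs = some v →
      Step (.proj (.record fs) l) v
  | projCong {t t' l} : Step t t' → Step (.proj t l) (.proj t' l)
  | iteTrue {t₁ t₂} : Step (.ite .tt t₁ t₂) t₁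
  | iteFalse {t₁ t₂} : Step (.ite .ff t₁ t₂) t₂
  | iteCong {c c' t₁ t₂} : Step c c' → Step (.ite c t₁ t₂) (.ite c' t₁ t₂)
  | letV {x v t₂} : Value v → Step (.letIn x v t₂) (subst x v t₂)
  | letCong {x t₁ t₁' t₂} : Step t₁ t₁' → Step (.letIn x t₁ t₂) (.letIn x t₁' t₂)

/-- `t` is an immediate subterm of `t'`. -/
inductive DirectSub : Tm → Tm → Prop where
  | absBody {x T t} : DirectSub t (.abs x T t)
  | appFn {t₁ t₂} : DirectSub t₁ (.app t₁ t₂)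
  | appArg {t₁ t₂} : DirectSub t₂ (.app t₁ t₂)
  | consHd {t₁ t₂} : DirectSub t₁ (.cons t₁ t₂)
  | consTl {t₁ t₂} : DirectSub t₂ (.cons t₁ t₂)
  | headArg {t} : DirectSub t (.head t)
  | tailArg {t} : DirectSub t (.tail t)
  | recordField {fs : List (String × Tm)} {l t} :
      (l, t) ∈ fs → DirectSub t (.record fs)
  | projArg {t l} : DirectSub t (.proj t l)
  | iteCond {c t₁ t₂} : DirectSub c (.ite c t₁ t₂)
  | iteThen {c t₁ t₂} : DirectSub t₁ (.ite c t₁ t₂)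
  | iteElse {c t₁ t₂} : DirectSub t₂ (.ite c t₁ t₂)
  | letBound {x t₁ t₂} : DirectSub t₁ (.letIn x t₁ t₂)
  | letBody {x t₁ t₂} : DirectSub t₂ (.letIn x t₁ t₂)

/-- `t` is a (reflexive-transitive) subterm of `t'`. -/
def Subterm : Tm → Tm → Prop := Relation.ReflTransGen DirectSub

/-- `t` contains one of the stuck forms `head nil` or `tail nil`. -/
def ContainsStuck (t : Tm) : Prop :=
  Subterm (.head .nil) t ∨ Subterm (.tail .nil) t

/-! Type soundness is preservation plus progress. No typing rule inspects the shape state, so a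
typing derivation can be replayed at any state and in any context that agrees on the free
variables (`Typing.mono`); in particular a closed term can be typed in the empty context.
Since `subst` does not avoid capture, the substitution lemma needs a closed substituend; this is
what call-by-value `beta` and `let` steps of closed terms provide, so preservation holds in the
empty context, and progress there fails only at `head nil` and `tail nil`. -/

theorem List.lookup_cons_of_ne {α β : Type*} [BEq α] [LawfulBEq α] {k a : α} (h : k ≠ a)
    {b : β} {l : List (α × β)} : List.lookup k ((a, b) :: l) = List.lookup k l := by
  simp [List.lookup, beq_eq_false_iff_ne.2 h]

theorem List.lookup_cons_imp_of_ne {α β : Type*} [BEq α] [LawfulBEq α] {l l' : List (α × β)}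
    {k a : α} (b : β) (h : k ≠ a → ∀ c, List.lookup k l = some c → List.lookup k l' = some c)
    (c : β) : List.lookup k ((a, b) :: l) = some c → List.lookup k ((a, b) :: l') = some c := by
  by_cases hka : k = a
  · subst hka; simp
  · simpa [List.lookup_cons_of_ne hka] using h hka c

theorem List.Forall₂.exists_lookup {α β γ : Type*} [BEq α] [LawfulBEq α] {R : β → γ → Prop}
    {l₁ : List (α × β)} {l₂ : List (α × γ)}
    (h : Forall₂ (fun p q => p.1 = q.1 ∧ R p.2 q.2) l₁ l₂) {k : α} {c : γ}
    (hk : List.lookup k l₂ = some c) : ∃ b, List.lookup k l₁ = some b ∧ R b c := by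
  induction h with
  | nil => simp at hk
  | @cons p q l₁ l₂ hpq _ ih =>
    obtain ⟨a, b⟩ := p
    obtain ⟨_, c'⟩ := q
    obtain ⟨rfl, hbc⟩ := hpq
    by_cases hka : k = a
    · subst hka
      rw [List.lookup_cons_self] at hk ⊢
      cases hk
      exact ⟨b, rfl, hbc⟩
    · rw [List.lookup_cons_of_ne hka] at hk ⊢
      exact ih hk

theorem List.Forall₂.append_cons_imp {α β : Type*} {R : α → β → Prop} {l₁ l₂ : List α}
    {a a' : α} {l : List β} (h : Forall₂ R (l₁ ++ a :: l₂) l) (ha : ∀ b, R a b → R a' b) :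
    Forall₂ R (l₁ ++ a' :: l₂) l := by
  induction l₁ generalizing l with
  | nil => cases h with | cons hab h₂ => exact .cons (ha _ hab) h₂
  | cons x l₁ ih => cases h with | cons hx h₂ => exact .cons hx (ih h₂)

theorem List.forall_or_exists_append_cons {α : Type*} {P Q : α → Prop} {l : List α}
    (h : ∀ x ∈ l, P x ∨ Q x) :
    (∀ x ∈ l, P x) ∨ ∃ l₁ x l₂, l = l₁ ++ x :: l₂ ∧ (∀ y ∈ l₁, P y) ∧ Q x := by
  induction l with
  | nil => simp
  | cons x l ih =>
    rcases h x mem_cons_self with hx | hx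
    · rcases ih fun y hy => h y (mem_cons_of_mem _ hy) with hl | ⟨l₁, y, l₂, rfl, hl₁, hy⟩
      · exact .inl (forall_mem_cons.2 ⟨hx, hl⟩)
      · exact .inr ⟨x :: l₁, y, l₂, rfl, forall_mem_cons.2 ⟨hx, hl₁⟩, hy⟩
    · exact .inr ⟨[], x, l, rfl, by simp, hx⟩

theorem freeVarsFields_eq_flatMap (fs : List (String × Tm)) :
    freeVarsFields fs = fs.flatMap (freeVars ·.2) := by
  induction fs with
  | nil => rfl
  | cons p fs ih => rw [List.flatMap_cons, ← ih]; rfl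

theorem substFields_eq_map (x : String) (s : Tm) (fs : List (String × Tm)) :
    substFields x s fs = fs.map fun p => (p.1, subst x s p.2) := by
  induction fs with
  | nil => rfl
  | cons p fs ih => rw [List.map_cons, ← ih]; rfl

theorem Typing.mono {S S' : ShapeState} {Γ Γ' : Ctx} {t : Tm} {T : Ty}
    (h : Typing S Γ t T S')
    (hΓ : ∀ z ∈ freeVars t, ∀ U, List.lookup z Γ = some U → List.lookup z Γ' = some U)
    (S₀ : ShapeState) : Typing S₀ Γ' t T S₀ := by
  induction h generalizing Γ' with
  | var h => exact .var (hΓ _ (by simp [freeVars]) _ h)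
  | node v => exact .node v
  | abs _ ih =>
    exact .abs (ih fun z hz => List.lookup_cons_imp_of_ne _ fun hzx =>
      hΓ z (by simp [freeVars, hz, hzx]))
  | app _ _ ih₁ ih₂ =>
    exact .app (ih₁ fun z hz => hΓ z (by simp [freeVars, hz]))
      (ih₂ fun z hz => hΓ z (by simp [freeVars, hz]))
  | nil => exact .nil
  | cons _ _ ih₁ ih₂ =>
    exact .cons (ih₁ fun z hz => hΓ z (by simp [freeVars, hz]))
      (ih₂ fun z hz => hΓ z (by simp [freeVars, hz]))
  | head _ ih => exact .head (ih fun z hz => hΓ z (by simpa [freeVars] using hz))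
  | tail _ ih => exact .tail (ih fun z hz => hΓ z (by simpa [freeVars] using hz))
  | @record _ _ fs _ hlen hfst _ ih =>
    refine .record hlen hfst fun i h₁ h₂ => ih i h₁ h₂ (fun z hz => hΓ z ?_)
    simp only [freeVars, freeVarsFields_eq_flatMap, List.mem_flatMap]
    exact ⟨_, List.get_mem _ _, hz⟩
  | proj _ hl ih => exact .proj (ih fun z hz => hΓ z (by simpa [freeVars] using hz)) hl
  | tt => exact .tt
  | ff => exact .ff
  | ite _ _ _ ihc ih₁ ih₂ =>
    exact .ite (ihc fun z hz => hΓ z (by simp [freeVars, hz]))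
      (ih₁ fun z hz => hΓ z (by simp [freeVars, hz]))
      (ih₂ fun z hz => hΓ z (by simp [freeVars, hz]))
  | letIn _ _ ih₁ ih₂ =>
    exact .letIn (ih₁ fun z hz => hΓ z (by simp [freeVars, hz]))
      (ih₂ fun z hz => List.lookup_cons_imp_of_ne _ fun hzx =>
        hΓ z (by simp [freeVars, hz, hzx]))

theorem Typing.atState {S S' : ShapeState} {Γ : Ctx} {t : Tm} {T : Ty}
    (h : Typing S Γ t T S') (S₀ : ShapeState) : Typing S₀ Γ t T S₀ :=
  h.mono (fun _ _ _ => id) S₀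

theorem Typing.of_closed {S S' : ShapeState} {Γ Γ' : Ctx} {t : Tm} {T : Ty}
    (h : Typing S Γ t T S') (ht : Closed t) (S₀ : ShapeState) : Typing S₀ Γ' t T S₀ :=
  h.mono (fun z hz => by simp [show freeVars t = [] from ht] at hz) S₀

theorem Typing.substitution {S S' Sv Sv' : ShapeState} {Γ Γ' : Ctx} {x : String} {v t : Tm}
    {T T₁ : Ty} (ht : Typing S Γ' t T S') (hv : Typing Sv [] v T₁ Sv')
    (hΓ : ∀ z ≠ x, ∀ U, List.lookup z Γ' = some U → List.lookup z Γ = some U)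
    (hx : List.lookup x Γ' = some T₁) (S₀ : ShapeState) : Typing S₀ Γ (subst x v t) T S₀ := by
  induction ht generalizing Γ with
  | @var _ _ y _ h =>
    by_cases hyx : y = x
    · subst hyx
      cases h.symm.trans hx
      simpa [subst] using hv.mono (fun z _ U h => by simp at h) S₀
    · simpa [subst, hyx] using Typing.var (hΓ y hyx _ h)
  | node w => exact .node w
  | @abs _ _ _ y _ _ _ hb ih =>
    by_cases hyx : y = x
    · subst hyx
      simpa [subst] using
        (hb.mono (fun z _ => List.lookup_cons_imp_of_ne _ fun hzx => hΓ z hzx) S₀).abs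
    · simpa [subst, hyx] using
        (ih (fun z hzx => List.lookup_cons_imp_of_ne _ fun _ => hΓ z hzx)
          (by rwa [List.lookup_cons_of_ne (Ne.symm hyx)])).abs
  | app _ _ ih₁ ih₂ => exact .app (ih₁ hΓ hx) (ih₂ hΓ hx)
  | nil => exact .nil
  | cons _ _ ih₁ ih₂ => exact .cons (ih₁ hΓ hx) (ih₂ hΓ hx)
  | head _ ih => exact .head (ih hΓ hx)
  | tail _ ih => exact .tail (ih hΓ hx)
  | record hlen hfst _ ih =>
    rw [subst, substFields_eq_map]
    refine .record (by simpa using hlen) (by simpa [Function.comp_def] using hfst) ?_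
    intro i h₁ h₂
    simpa using ih i (by simpa using h₁) h₂ hΓ hx
  | proj _ hl ih => exact .proj (ih hΓ hx) hl
  | tt => exact .tt
  | ff => exact .ff
  | ite _ _ _ ihc ih₁ ih₂ => exact .ite (ihc hΓ hx) (ih₁ hΓ hx) (ih₂ hΓ hx)
  | @letIn _ _ _ _ y _ _ _ _ _ h₂ ih₁ ih₂ =>
    by_cases hyx : y = x
    · subst hyx
      simpa [subst] using (ih₁ hΓ hx).letIn
        (h₂.mono (fun z _ => List.lookup_cons_imp_of_ne _ fun hzx => hΓ z hzx) S₀)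
    · simpa [subst, hyx] using (ih₁ hΓ hx).letIn
        (ih₂ (fun z hzx => List.lookup_cons_imp_of_ne _ fun _ => hΓ z hzx)
          (by rwa [List.lookup_cons_of_ne (Ne.symm hyx)]))

theorem Typing.substitution_cons {S S' Sv Sv' : ShapeState} {Γ : Ctx} {x : String} {v t : Tm}
    {T T₁ : Ty} (ht : Typing S ((x, T₁) :: Γ) t T S') (hv : Typing Sv [] v T₁ Sv')
    (S₀ : ShapeState) : Typing S₀ Γ (subst x v t) T S₀ :=
  ht.substitution hv (fun _ hzx _ => by rw [List.lookup_cons_of_ne hzx]; exact id)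
    List.lookup_cons_self S₀

theorem typing_record_iff {S : ShapeState} {Γ : Ctx} {fs : List (String × Tm)}
    {Ts : List (String × Ty)} :
    Typing S Γ (.record fs) (.record Ts) S ↔
      List.Forall₂ (fun p q => p.1 = q.1 ∧ Typing S Γ p.2 q.2 S) fs Ts := by
  rw [List.forall₂_iff_get]
  constructor
  · intro h
    cases h with
    | record hlen hfst hty =>
      refine ⟨hlen, fun i h₁ h₂ => ⟨?_, hty i h₁ h₂⟩⟩
      simpa [h₁, h₂] using congrArg (·[i]?) hfst
  · rintro ⟨hlen, hR⟩
    refine .record hlen (List.ext_get (by simpa using hlen) fun i h₁ h₂ => ?_)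
      fun i h₁ h₂ => (hR i h₁ h₂).2
    simpa using (hR i (by simpa using h₁) (by simpa using h₂)).1

theorem Typing.preservation {S S' : ShapeState} {t t' : Tm} {T : Ty}
    (h : Typing S [] t T S') (hs : Step t t') (S₀ : ShapeState) : Typing S₀ [] t' T S₀ := by
  induction hs generalizing S S' T with
  | beta _ => cases h with | app h₁ h₂ => cases h₁ with | abs hb => exact hb.substitution_cons h₂ S₀
  | app₁ _ ih => cases h with | app h₁ h₂ => exact .app (ih h₁) (h₂.atState S₀)
  | app₂ _ _ ih => cases h with | app h₁ h₂ => exact .app (h₁.atState S₀) (ih h₂)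
  | cons₁ _ ih => cases h with | cons h₁ h₂ => exact .cons (ih h₁) (h₂.atState S₀)
  | cons₂ _ _ ih => cases h with | cons h₁ h₂ => exact .cons (h₁.atState S₀) (ih h₂)
  | headCons _ _ => cases h with | head h₁ => cases h₁ with | cons h₂ _ => exact h₂.atState S₀
  | headCong _ ih => cases h with | head h₁ => exact .head (ih h₁)
  | tailCons _ _ => cases h with | tail h₁ => cases h₁ with | cons _ h₃ => exact h₃.atState S₀
  | tailCong _ ih => cases h with | tail h₁ => exact .tail (ih h₁)
  | recordCong _ _ ih =>
    obtain ⟨Ts, rfl⟩ : ∃ Ts, T = .record Ts := by cases h; exact ⟨_, rfl⟩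
    exact typing_record_iff.2 <| (typing_record_iff.1 (h.atState S₀)).append_cons_imp
      fun _ ⟨hl, hU⟩ => ⟨hl, ih hU⟩
  | projRecord _ hlook =>
    cases h with
    | proj h₁ hl =>
      obtain ⟨w, hw, hwT⟩ := (typing_record_iff.1 (h₁.atState S₀)).exists_lookup
        (R := fun v U => Typing S₀ [] v U S₀) hl
      rw [hlook] at hw
      cases hw
      exact hwT
  | projCong _ ih => cases h with | proj h₁ hl => exact .proj (ih h₁) hl
  | iteTrue => cases h with | ite _ h₁ _ => exact h₁.atState S₀
  | iteFalse => cases h with | ite _ _ h₂ => exact h₂.atState S₀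
  | iteCong _ ih =>
    cases h with | ite hc h₁ h₂ => exact .ite (ih hc) (h₁.atState S₀) (h₂.atState S₀)
  | letV _ => cases h with | letIn h₁ h₂ => exact h₂.substitution_cons h₁ S₀
  | letCong _ ih => cases h with | letIn h₁ h₂ => exact .letIn (ih h₁) (h₂.atState S₀)

theorem Value.exists_abs_of_typing {S S' : ShapeState} {Γ : Ctx} {v : Tm} {T₁ T₂ : Ty}
    (hv : Value v) (h : Typing S Γ v (.arrow T₁ T₂) S') : ∃ x t, v = .abs x T₁ t := by
  cases hv <;> cases h
  exact ⟨_, _, rfl⟩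

theorem Value.eq_nil_or_cons_of_typing {S S' : ShapeState} {Γ : Ctx} {v : Tm} {T : Ty}
    (hv : Value v) (h : Typing S Γ v (.list T) S') :
    v = .nil ∨ ∃ v₁ v₂, v = .cons v₁ v₂ ∧ Value v₁ ∧ Value v₂ := by
  cases hv <;> cases h
  · exact .inl rfl
  · exact .inr ⟨_, _, rfl, ‹_›, ‹_›⟩

theorem Value.eq_tt_or_ff_of_typing {S S' : ShapeState} {Γ : Ctx} {v : Tm}
    (hv : Value v) (h : Typing S Γ v .bool S') : v = .tt ∨ v = .ff := by
  cases hv <;> cases h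
  · exact .inl rfl
  · exact .inr rfl

theorem Value.exists_record_of_typing {S S' : ShapeState} {Γ : Ctx} {v : Tm}
    {Ts : List (String × Ty)} (hv : Value v) (h : Typing S Γ v (.record Ts) S') :
    ∃ fs, v = .record fs ∧ ∀ p ∈ fs, Value p.2 := by
  cases hv <;> cases h
  exact ⟨_, rfl, ‹_›⟩

theorem ContainsStuck.of_directSub {u w : Tm} (h : ContainsStuck u) (hd : DirectSub u w) :
    ContainsStuck w :=
  h.imp (·.tail hd) (·.tail hd)

def Progresses (t : Tm) : Prop :=
  Value t ∨ ContainsStuck t ∨ ∃ t', Step t t'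

theorem Progresses.of_directSub {u w : Tm} (hu : Progresses u) (hd : DirectSub u w)
    (hstep : ∀ {u'}, Step u u' → ∃ w', Step w w') (hval : Value u → Progresses w) :
    Progresses w := by
  rcases hu with hv | hstk | ⟨_, hs⟩
  · exact hval hv
  · exact .inr (.inl (hstk.of_directSub hd))
  · exact .inr (.inr (hstep hs))

theorem Typing.progress {S S' : ShapeState} {t : Tm} {T : Ty} (h : Typing S [] t T S') :
    Progresses t := by
  generalize hΓ : ([] : Ctx) = Γ at h
  induction h with
  | var h => subst hΓ; simp at h
  | node v => exact .inl (.node v)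
  | abs _ => exact .inl (.abs _ _ _)
  | app h₁ _ ih₁ ih₂ =>
    refine (ih₁ hΓ).of_directSub .appFn (⟨_, .app₁ ·⟩) fun hv₁ =>
      (ih₂ hΓ).of_directSub .appArg (⟨_, .app₂ hv₁ ·⟩) fun hv₂ => ?_
    obtain ⟨x, tb, rfl⟩ := hv₁.exists_abs_of_typing h₁
    exact .inr (.inr ⟨_, .beta hv₂⟩)
  | nil => exact .inl .nil
  | cons _ _ ih₁ ih₂ =>
    exact (ih₁ hΓ).of_directSub .consHd (⟨_, .cons₁ ·⟩) fun hv₁ =>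
      (ih₂ hΓ).of_directSub .consTl (⟨_, .cons₂ hv₁ ·⟩) fun hv₂ => .inl (.cons hv₁ hv₂)
  | head h ih =>
    refine (ih hΓ).of_directSub .headArg (⟨_, .headCong ·⟩) fun hv => ?_
    rcases hv.eq_nil_or_cons_of_typing h with rfl | ⟨_, _, rfl, hv₁, hv₂⟩
    · exact .inr (.inl (.inl .refl))
    · exact .inr (.inr ⟨_, .headCons hv₁ hv₂⟩)
  | tail h ih =>
    refine (ih hΓ).of_directSub .tailArg (⟨_, .tailCong ·⟩) fun hv => ?_
    rcases hv.eq_nil_or_cons_of_typing h with rfl | ⟨_, _, rfl, hv₁, hv₂⟩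
    · exact .inr (.inl (.inr .refl))
    · exact .inr (.inr ⟨_, .tailCons hv₁ hv₂⟩)
  | @record _ _ fs _ hlen _ _ ih =>
    have hfields : ∀ p ∈ fs, Progresses p.2 := by
      intro p hp
      obtain ⟨i, rfl⟩ := List.mem_iff_get.1 hp
      exact ih i i.2 (hlen ▸ i.2) hΓ
    rcases List.forall_or_exists_append_cons hfields with
      hvals | ⟨vs, ⟨l, u⟩, ts, rfl, hvs, hstk | ⟨_, hu⟩⟩
    · exact .inl (.record hvals)
    · exact .inr (.inl (hstk.of_directSub (.recordField (l := l) (by simp))))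
    · exact .inr (.inr ⟨_, .recordCong hvs hu⟩)
  | proj h hl ih =>
    refine (ih hΓ).of_directSub .projArg (⟨_, .projCong ·⟩) fun hv => ?_
    obtain ⟨fs, rfl, hvals⟩ := hv.exists_record_of_typing h
    obtain ⟨v, hv, -⟩ := (typing_record_iff.1 (h.atState [])).exists_lookup
      (R := fun v U => Typing [] _ v U []) hl
    exact .inr (.inr ⟨v, .projRecord hvals hv⟩)
  | tt => exact .inl .tt
  | ff => exact .inl .ff
  | ite hc _ _ ihc =>
    refine (ihc hΓ).of_directSub .iteCond (⟨_, .iteCong ·⟩) fun hv => ?_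
    rcases hv.eq_tt_or_ff_of_typing hc with rfl | rfl
    · exact .inr (.inr ⟨_, .iteTrue⟩)
    · exact .inr (.inr ⟨_, .iteFalse⟩)
  | letIn _ _ ih₁ =>
    exact (ih₁ hΓ).of_directSub .letBound (⟨_, .letCong ·⟩) fun hv => .inr (.inr ⟨_, .letV hv⟩)

/-- Type soundness: a well-typed, closed term does not get stuck during
    evaluation, except possibly at the forms `head nil` or `tail nil`. -/
theorem type_soundness {S S' : ShapeState} {Γ : Ctx} {t t' : Tm} {T : Ty}
    (hclosed : Closed t) (hty : Typing S Γ t T S')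
    (hsteps : Relation.ReflTransGen Step t t') :
    Value t' ∨ ContainsStuck t' ∨ ∃ t'', Step t' t'' := by
  have hty' : Typing S [] t' T S := by
    induction hsteps with
    | refl => exact hty.of_closed hclosed S
    | tail _ hs ih => exact ih.preservation hs S
  exact hty'.progress
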